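/- arXiv:2509.20598 — 4 statements merged into one kernel-verified Lean document; each statement's English description precedes it below -/
import Mathlib

section
/- A Borel measurable function φ : [1,∞) → (0,∞) is RO-varying at infinity (i.e., there exist a > 1 and c ≥ 1 with c⁻¹ ≤ φ(λt)/φ(t) ≤ c for all t ≥ 1, λ ∈ [1,a]) if and only if there exist real numbers s₀ ≤ s₁ and a constant c' ≥ 1 such that t^{-s₀} φ(t) ≤ c' τ^{-s₀} φ(τ) and τ^{-s₁} φ(τ) ≤ c' t^{-s₁} φ(t) for all 1 ≤ t ≤ τ. -/
/-!
Substituting `τ = l t`, the right-hand side says `c'⁻¹ l ^ s₀ ≤ φ (l t) / φ t ≤ c' l ^ s₁` for all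
`l, t ≥ 1`; restricting to `l ∈ [1, 2]` gives RO-variation. Conversely, `n` steps of ratio at most
`a` bound `φ (l t) / φ t` by `c ^ n` for `l ≤ a ^ n`, and `n = ⌈log_a l⌉` gives
`c ^ n ≤ c · l ^ (log_a c)`. Lower bounds on `φ` are upper bounds on `φ⁻¹`.
-/

open Real Set

lemma inv_le_mul_inv_iff_le_mul {x y C : ℝ} (hx : 0 < x) (hy : 0 < y) :
    x⁻¹ ≤ C * y⁻¹ ↔ y ≤ C * x := by
  rw [← div_eq_mul_inv, le_div_iff₀ hy, inv_mul_le_iff₀ hx, mul_comm]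

lemma inv_le_div_and_div_le_iff {x y c : ℝ} (hx : 0 < x) (hy : 0 < y) (hc : 0 < c) :
    (c⁻¹ ≤ y / x ∧ y / x ≤ c) ↔ (y ≤ c * x ∧ y⁻¹ ≤ c * x⁻¹) := by
  rw [inv_le_mul_inv_iff_le_mul hy hx, div_le_iff₀ hx, le_div_iff₀ hx, inv_mul_le_iff₀ hc, and_comm]

lemma mul_rpow_neg_mul_le_iff {l t : ℝ} (hl : 0 < l) (ht : 0 < t) (s C x y : ℝ) :
    (l * t) ^ (-s) * x ≤ C * (t ^ (-s) * y) ↔ x ≤ C * l ^ s * y := by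
  have hls : 0 < l ^ s := rpow_pos_of_pos hl s
  have hts : 0 < (t ^ s)⁻¹ := inv_pos.2 (rpow_pos_of_pos ht s)
  rw [mul_rpow hl.le ht.le, rpow_neg hl.le, rpow_neg ht.le,
    show (l ^ s)⁻¹ * (t ^ s)⁻¹ * x = (t ^ s)⁻¹ * ((l ^ s)⁻¹ * x) by ring,
    show C * ((t ^ s)⁻¹ * y) = (t ^ s)⁻¹ * (C * y) by ring,
    mul_le_mul_iff_right₀ hts, inv_mul_le_iff₀ hls, mul_left_comm, mul_assoc]

section

variable {f : ℝ → ℝ}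

lemma rpow_neg_mul_le_iff {s C : ℝ} :
    (∀ t τ : ℝ, 1 ≤ t → t ≤ τ → τ ^ (-s) * f τ ≤ C * (t ^ (-s) * f t)) ↔
      ∀ t ≥ (1 : ℝ), ∀ l ≥ (1 : ℝ), f (l * t) ≤ C * l ^ s * f t := by
  constructor
  · intro h t ht l hl
    have hlt : t ≤ l * t := le_mul_of_one_le_left (by linarith) hl
    exact (mul_rpow_neg_mul_le_iff (by linarith) (by linarith) s C _ _).1 (h t (l * t) ht hlt)
  · intro h t τ ht htτ
    have ht0 : 0 < t := by linarith
    have hτ : τ / t * t = τ := div_mul_cancel₀ τ ht0.ne'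
    have hl : 1 ≤ τ / t := (one_le_div ht0).2 htτ
    have key := (mul_rpow_neg_mul_le_iff (by linarith) ht0 s C _ _).2 (h t ht (τ / t) hl)
    rwa [hτ] at key

lemma le_pow_mul_of_le_mul {a c : ℝ} (ha : 1 ≤ a) (hc : 0 ≤ c)
    (hf : ∀ t ≥ (1 : ℝ), ∀ l ∈ Icc 1 a, f (l * t) ≤ c * f t) (n : ℕ) :
    ∀ t ≥ (1 : ℝ), ∀ l ∈ Icc 1 (a ^ n), f (l * t) ≤ c ^ n * f t := by
  induction n with
  | zero =>
    rintro t - l ⟨hl1, hl2⟩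
    rw [pow_zero] at hl2 ⊢
    rw [le_antisymm hl2 hl1, one_mul, one_mul]
  | succ n ih =>
    rintro t ht l ⟨hl1, hl2⟩
    have ha0 : 0 < a := by linarith
    -- factor `l = (l / l') * l'` with `l' ∈ [1, a ^ n]` and `l / l' ∈ [1, a]`
    set l' := max 1 (l / a)
    have hl' : l' ∈ Icc 1 (a ^ n) :=
      ⟨le_max_left _ _, max_le (one_le_pow₀ ha) (by rw [div_le_iff₀ ha0, ← pow_succ]; exact hl2)⟩
    have hl'0 : 0 < l' := by linarith [hl'.1]
    have hq : l / l' ∈ Icc 1 a := by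
      refine ⟨(one_le_div hl'0).2 (max_le hl1 (div_le_self (by linarith) ha)), ?_⟩
      rw [div_le_iff₀ hl'0]
      calc l = a * (l / a) := by field_simp
        _ ≤ a * l' := mul_le_mul_of_nonneg_left (le_max_right _ _) ha0.le
    have hl't : 1 ≤ l' * t := one_le_mul_of_one_le_of_one_le hl'.1 ht
    calc f (l * t) = f (l / l' * (l' * t)) := by rw [← mul_assoc, div_mul_cancel₀ l hl'0.ne']
      _ ≤ c * f (l' * t) := hf _ hl't _ hq
      _ ≤ c * (c ^ n * f t) := mul_le_mul_of_nonneg_left (ih t ht l' hl') hc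
      _ = c ^ (n + 1) * f t := by ring

lemma le_mul_rpow_logb_mul_of_le_mul {a c : ℝ} (ha : 1 < a) (hc : 1 ≤ c)
    (hf0 : ∀ t ≥ (1 : ℝ), 0 ≤ f t) (hf : ∀ t ≥ (1 : ℝ), ∀ l ∈ Icc 1 a, f (l * t) ≤ c * f t) :
    ∀ t ≥ (1 : ℝ), ∀ l ≥ (1 : ℝ), f (l * t) ≤ c * l ^ logb a c * f t := by
  intro t ht l hl
  have ha0 : 0 < a := by linarith
  set x := logb a l
  set n := ⌈x⌉₊
  have hx : a ^ x = l := rpow_logb ha0 ha.ne' (by linarith)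
  have hln : l ≤ a ^ n := by
    rw [← hx, ← rpow_natCast]
    exact rpow_le_rpow_of_exponent_le ha.le (Nat.le_ceil x)
  have hcx : l ^ logb a c = c ^ x := by
    rw [← hx, ← rpow_mul ha0.le, mul_comm, rpow_mul ha0.le, rpow_logb ha0 ha.ne' (by linarith)]
  have hcn : c ^ n ≤ c * l ^ logb a c :=
    calc c ^ n = c ^ (n : ℝ) := (rpow_natCast c n).symm
      _ ≤ c ^ (1 + x) :=
        rpow_le_rpow_of_exponent_le hc (by linarith [Nat.ceil_lt_add_one (logb_nonneg ha hl)])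
      _ = c * l ^ logb a c := by rw [hcx, rpow_add (by linarith), rpow_one]
  calc f (l * t) ≤ c ^ n * f t := le_pow_mul_of_le_mul ha.le (by linarith) hf n t ht l ⟨hl, hln⟩
    _ ≤ c * l ^ logb a c * f t := mul_le_mul_of_nonneg_right hcn (hf0 t ht)

lemma le_mul_of_le_mul_rpow {s C b M : ℝ} (hC : 0 ≤ C) (hs : s ≤ M) (hM : 0 ≤ M)
    (hf0 : ∀ t ≥ (1 : ℝ), 0 ≤ f t)
    (hf : ∀ t ≥ (1 : ℝ), ∀ l ≥ (1 : ℝ), f (l * t) ≤ C * l ^ s * f t) :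
    ∀ t ≥ (1 : ℝ), ∀ l ∈ Icc 1 b, f (l * t) ≤ C * b ^ M * f t := by
  rintro t ht l ⟨hl1, hlb⟩
  have hls : l ^ s ≤ b ^ M :=
    calc l ^ s ≤ l ^ M := rpow_le_rpow_of_exponent_le hl1 hs
      _ ≤ b ^ M := rpow_le_rpow (by linarith) hlb hM
  calc f (l * t) ≤ C * l ^ s * f t := hf t ht l hl1
    _ ≤ C * b ^ M * f t := by gcongr; exact hf0 t ht

end

lemma rpow_neg_mul_inv_le_iff {φ : ℝ → ℝ} (hpos : ∀ t ≥ (1 : ℝ), 0 < φ t) {s C : ℝ} :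
    (∀ t τ : ℝ, 1 ≤ t → t ≤ τ → τ ^ (-s) * (φ τ)⁻¹ ≤ C * (t ^ (-s) * (φ t)⁻¹)) ↔
      ∀ t τ : ℝ, 1 ≤ t → t ≤ τ → t ^ s * φ t ≤ C * (τ ^ s * φ τ) := by
  refine forall₄_congr fun t τ ht htτ => ?_
  have hτ : 0 < τ := by linarith
  rw [rpow_neg (x := t) (by linarith), rpow_neg hτ.le, ← mul_inv, ← mul_inv,
    inv_le_mul_inv_iff_le_mul (by have := hpos τ (by linarith); positivity)
      (by have := hpos t ht; positivity)]

lemma ratio_mem_Icc_iff {φ : ℝ → ℝ} (hpos : ∀ t ≥ (1 : ℝ), 0 < φ t) {a c : ℝ} (hc : 0 < c) :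
    (∀ t ≥ (1 : ℝ), ∀ l ∈ Icc 1 a, c⁻¹ ≤ φ (l * t) / φ t ∧ φ (l * t) / φ t ≤ c) ↔
      (∀ t ≥ (1 : ℝ), ∀ l ∈ Icc 1 a, φ (l * t) ≤ c * φ t) ∧
        ∀ t ≥ (1 : ℝ), ∀ l ∈ Icc 1 a, (φ (l * t))⁻¹ ≤ c * (φ t)⁻¹ := by
  simp only [← forall_and]
  refine forall₄_congr fun t ht l hl => ?_
  exact inv_le_div_and_div_le_iff (hpos t ht) (hpos _ (one_le_mul_of_one_le_of_one_le hl.1 ht)) hc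

theorem stmt1_general (φ : ℝ → ℝ)
    (hpos : ∀ t ≥ (1:ℝ), 0 < φ t) :
    (∃ a > (1:ℝ), ∃ c ≥ (1:ℝ), ∀ t ≥ (1:ℝ), ∀ l ∈ Set.Icc (1:ℝ) a,
      c⁻¹ ≤ φ (l * t) / φ t ∧ φ (l * t) / φ t ≤ c)
    ↔
    (∃ s₀ s₁ : ℝ, s₀ ≤ s₁ ∧ ∃ c' ≥ (1:ℝ), ∀ t τ : ℝ, 1 ≤ t → t ≤ τ →
      t ^ (-s₀) * φ t ≤ c' * (τ ^ (-s₀) * φ τ) ∧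
      τ ^ (-s₁) * φ τ ≤ c' * (t ^ (-s₁) * φ t)) := by
  have hφ0 : ∀ t ≥ (1:ℝ), 0 ≤ φ t := fun t ht => (hpos t ht).le
  have hφinv0 : ∀ t ≥ (1:ℝ), 0 ≤ (φ t)⁻¹ := fun t ht => inv_nonneg.2 (hφ0 t ht)
  constructor
  · rintro ⟨a, ha, c, hc, h⟩
    obtain ⟨hstep, hstepinv⟩ := (ratio_mem_Icc_iff hpos (by linarith)).1 h
    have hup := le_mul_rpow_logb_mul_of_le_mul ha hc hφ0 hstep
    have hlow := le_mul_rpow_logb_mul_of_le_mul ha hc hφinv0 hstepinv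
    refine ⟨-logb a c, logb a c, by linarith [logb_nonneg ha hc], c, hc,
      fun t τ ht htτ => ⟨?_, rpow_neg_mul_le_iff.2 hup t τ ht htτ⟩⟩
    rw [neg_neg]
    exact (rpow_neg_mul_inv_le_iff hpos).1 (rpow_neg_mul_le_iff.2 hlow) t τ ht htτ
  · rintro ⟨s₀, s₁, -, c', hc', h⟩
    set M := |s₀| + |s₁|
    have hM : 0 ≤ M := by positivity
    have hup := le_mul_of_le_mul_rpow (b := 2) (by linarith)
      (by linarith [le_abs_self s₁, abs_nonneg s₀]) hM hφ0
      (rpow_neg_mul_le_iff.1 fun t τ ht htτ => (h t τ ht htτ).2)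
    have hlow := le_mul_of_le_mul_rpow (b := 2) (by linarith)
      (by linarith [neg_le_abs s₀, abs_nonneg s₁]) hM hφinv0
      (rpow_neg_mul_le_iff.1 ((rpow_neg_mul_inv_le_iff hpos).2 fun t τ ht htτ => (h t τ ht htτ).1))
    have hc : 1 ≤ c' * 2 ^ M := one_le_mul_of_one_le_of_one_le hc' (one_le_rpow one_le_two hM)
    exact ⟨2, one_lt_two, c' * 2 ^ M, hc, (ratio_mem_Icc_iff hpos (by linarith)).2 ⟨hup, hlow⟩⟩

/-- A Borel measurable φ : [1,∞) → (0,∞) is RO-varying at infinity iff there exist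
s₀ ≤ s₁ and c' ≥ 1 with t^{-s₀} φ(t) ≤ c' τ^{-s₀} φ(τ) and τ^{-s₁} φ(τ) ≤ c' t^{-s₁} φ(t)
for all 1 ≤ t ≤ τ. -/
theorem stmt1 (φ : ℝ → ℝ)
    (hpos : ∀ t ≥ (1:ℝ), 0 < φ t)
    (hmeas : Measurable φ) :
    (∃ a > (1:ℝ), ∃ c ≥ (1:ℝ), ∀ t ≥ (1:ℝ), ∀ l ∈ Set.Icc (1:ℝ) a,
      c⁻¹ ≤ φ (l * t) / φ t ∧ φ (l * t) / φ t ≤ c)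
    ↔
    (∃ s₀ s₁ : ℝ, s₀ ≤ s₁ ∧ ∃ c' ≥ (1:ℝ), ∀ t τ : ℝ, 1 ≤ t → t ≤ τ →
      t ^ (-s₀) * φ t ≤ c' * (τ ^ (-s₀) * φ τ) ∧
      τ ^ (-s₁) * φ τ ≤ c' * (t ^ (-s₁) * φ t)) :=
  stmt1_general φ hpos
end

section
/- Let φ be RO-varying at infinity such that ∫₁^∞ t^{n-1}/φ(t)² dt < ∞. Then every u ∈ H^φ(ℝⁿ) satisfies ‖u‖_{L^∞} ≤ C ‖u‖_{H^φ} for a constant C independent of u, so H^φ(ℝⁿ) embeds continuously into the bounded continuous functions. -/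
/-!
Fourier inversion bounds `|u(x)|` by `(2π)^{-n} ∫ |û|`, and Cauchy–Schwarz against the weight
`φ(⟨ξ⟩)` gives `∫ |û| ≤ ‖φ(⟨ξ⟩)⁻¹‖_{L²} ‖u‖_{H^φ}`. It remains to see that `φ(⟨ξ⟩)⁻²` is
integrable. Iterating the RO-variation bound shows `φ(t) ≤ K φ(l t)` uniformly for
`l ∈ [1, √2]`; since `⟨ξ⟩ = l · max(|ξ|, 1)` with such an `l`, we get
`φ(⟨ξ⟩)⁻² ≤ K² φ(max(|ξ|, 1))⁻²`, which is integrable by polar coordinates and the hypothesis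
`∫₁^∞ t^{n-1} φ(t)⁻² dt < ∞`.
-/

open MeasureTheory

/-- The "Japanese bracket" ⟨ξ⟩ = (1 + |ξ|²)^{1/2}. -/
noncomputable def jb {n : ℕ} (ξ : EuclideanSpace ℝ (Fin n)) : ℝ :=
  Real.sqrt (1 + ‖ξ‖ ^ 2)

open Set

lemma le_mul_pow_of_le_mul_of_mem_Icc {φ : ℝ → ℝ} {a c : ℝ} (ha : 1 ≤ a) (hc : 0 ≤ c)
    (h : ∀ t ≥ (1:ℝ), ∀ l ∈ Icc 1 a, φ t ≤ c * φ (l * t)) (k : ℕ) :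
    ∀ t ≥ (1:ℝ), ∀ l ∈ Icc 1 (a ^ k), φ t ≤ c ^ k * φ (l * t) := by
  induction k with
  | zero =>
    rintro t - l ⟨hl1, hl⟩
    rw [le_antisymm (by simpa using hl) hl1]
    simp
  | succ k ih =>
    rintro t ht l ⟨hl1, hl⟩
    have hck : 0 ≤ c ^ k := pow_nonneg hc k
    rcases le_or_gt l a with hla | hla
    · have hlt : 1 ≤ l * t := one_le_mul_of_one_le_of_one_le hl1 ht
      calc φ t ≤ c * φ (l * t) := h t ht l ⟨hl1, hla⟩
        _ ≤ c * (c ^ k * φ (1 * (l * t))) :=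
          mul_le_mul_of_nonneg_left (ih _ hlt 1 ⟨le_rfl, one_le_pow₀ ha⟩) hc
        _ = c ^ (k + 1) * φ (l * t) := by rw [one_mul, pow_succ]; ring
    · have ha0 : 0 < a := zero_lt_one.trans_le ha
      have hl' : l / a ∈ Icc 1 (a ^ k) :=
        ⟨(one_le_div ha0).2 hla.le, (div_le_iff₀ ha0).2 (by rwa [← pow_succ])⟩
      have hlt : 1 ≤ l / a * t := one_le_mul_of_one_le_of_one_le hl'.1 ht
      calc φ t ≤ c ^ k * φ (l / a * t) := ih t ht _ hl'
        _ ≤ c ^ k * (c * φ (a * (l / a * t))) :=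
          mul_le_mul_of_nonneg_left (h _ hlt a ⟨ha, le_rfl⟩) hck
        _ = c ^ (k + 1) * φ (l * t) := by
          rw [← mul_assoc a, mul_div_cancel₀ _ ha0.ne', pow_succ, mul_assoc]

lemma exists_le_mul_of_le_mul_of_mem_Icc {φ : ℝ → ℝ} {a c : ℝ} (ha : 1 < a) (hc : 0 ≤ c)
    (h : ∀ t ≥ (1:ℝ), ∀ l ∈ Icc 1 a, φ t ≤ c * φ (l * t)) (L : ℝ) :
    ∃ K, ∀ t ≥ (1:ℝ), ∀ l ∈ Icc 1 L, φ t ≤ K * φ (l * t) := by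
  obtain ⟨k, hk⟩ := pow_unbounded_of_one_lt L ha
  exact ⟨c ^ k, fun t ht l hl =>
    le_mul_pow_of_le_mul_of_mem_Icc ha.le hc h k t ht l (Icc_subset_Icc_right hk.le hl)⟩

lemma sqrt_one_add_sq_eq_mul_max {r : ℝ} (hr : 0 ≤ r) :
    ∃ l ∈ Icc 1 (Real.sqrt 2), Real.sqrt (1 + r ^ 2) = l * max r 1 := by
  have hm : 0 < max r 1 := lt_max_of_lt_right one_pos
  refine ⟨Real.sqrt (1 + r ^ 2) / max r 1, ⟨?_, ?_⟩, (div_mul_cancel₀ _ hm.ne').symm⟩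
  · rw [one_le_div hm, max_le_iff]
    constructor
    · exact Real.le_sqrt_of_sq_le (by linarith)
    · exact Real.le_sqrt_of_sq_le (by nlinarith)
  · rw [div_le_iff₀ hm, ← Real.sqrt_sq hm.le, ← Real.sqrt_mul zero_le_two]
    refine Real.sqrt_le_sqrt ?_
    rcases le_total r 1 with h | h
    · rw [max_eq_right h]; nlinarith
    · rw [max_eq_left h]; nlinarith

lemma integrable_fun_norm_of_integrableOn_Ioi {E : Type*} [NormedAddCommGroup E]
    [NormedSpace ℝ E] [MeasurableSpace E] [BorelSpace E] [FiniteDimensional ℝ E]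
    (μ : Measure E) [μ.IsAddHaarMeasure] {g : ℝ → ℝ} {M : ℝ} (hg : Measurable g)
    (hbdd : ∀ r ∈ Ioc (0:ℝ) 1, |g r| ≤ M)
    (hint : IntegrableOn (fun r => r ^ ((Module.finrank ℝ E : ℝ) - 1) * g r) (Ioi 1)) :
    Integrable (fun x => g ‖x‖) μ := by
  rcases subsingleton_or_nontrivial E with hE | hE
  · have : (fun x : E => g ‖x‖) = fun _ => g 0 := by
      ext x; rw [Subsingleton.elim x 0, norm_zero]
    rw [this]
    exact integrable_const _
  have hd : 1 ≤ Module.finrank ℝ E := Module.finrank_pos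
  rw [integrable_fun_norm_addHaar μ, ← Ioc_union_Ioi_eq_Ioi zero_le_one]
  refine IntegrableOn.union ?_ ?_
  · refine Measure.integrableOn_of_bounded (M := M) measure_Ioc_lt_top.ne
      (by fun_prop) ?_
    refine (ae_restrict_iff' measurableSet_Ioc).2 (ae_of_all _ fun r hr => ?_)
    rw [smul_eq_mul, norm_mul, norm_pow, Real.norm_of_nonneg hr.1.le]
    exact (mul_le_mul (pow_le_one₀ hr.1.le hr.2) (hbdd r hr) (abs_nonneg _)
      zero_le_one).trans_eq (one_mul M)
  · refine hint.congr_fun (fun r (hr : 1 < r) => ?_) measurableSet_Ioi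
    rw [smul_eq_mul, ← Real.rpow_natCast, Nat.cast_sub hd, Nat.cast_one]

lemma inv_sq_le_mul_inv_sq_of_le_mul {x y K : ℝ} (hx : 0 < x) (hy : 0 < y) (h : x ≤ K * y) :
    y⁻¹ ^ 2 ≤ K ^ 2 * x⁻¹ ^ 2 := by
  rw [← mul_pow]
  refine pow_le_pow_left₀ (inv_nonneg.2 hy.le) ?_ 2
  rwa [le_mul_inv_iff₀ hx, inv_mul_le_iff₀ hy, mul_comm]

lemma one_le_sqrt_one_add_sq (r : ℝ) : 1 ≤ Real.sqrt (1 + r ^ 2) :=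
  Real.one_le_sqrt.2 (le_add_of_nonneg_right (sq_nonneg r))

lemma inv_sq_comp_sqrt_one_add_sq_le {φ : ℝ → ℝ} {K : ℝ} (hpos : ∀ t ≥ (1:ℝ), 0 < φ t)
    (hK : ∀ t ≥ (1:ℝ), ∀ l ∈ Icc 1 (Real.sqrt 2), φ t ≤ K * φ (l * t)) {r : ℝ} (hr : 0 ≤ r) :
    (φ (Real.sqrt (1 + r ^ 2)))⁻¹ ^ 2 ≤ K ^ 2 * (φ (max r 1))⁻¹ ^ 2 := by
  obtain ⟨l, hl, hsqrt⟩ := sqrt_one_add_sq_eq_mul_max hr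
  refine inv_sq_le_mul_inv_sq_of_le_mul (hpos _ (le_max_right r 1))
    (hpos _ (one_le_sqrt_one_add_sq r)) ?_
  rw [hsqrt]
  exact hK _ (le_max_right r 1) l hl

lemma integrable_inv_sq_comp_jb {n : ℕ} {φ : ℝ → ℝ} {K : ℝ} (hpos : ∀ t ≥ (1:ℝ), 0 < φ t)
    (hmeas : Measurable φ)
    (hK : ∀ t ≥ (1:ℝ), ∀ l ∈ Icc 1 (Real.sqrt 2), φ t ≤ K * φ (l * t))
    (hint : ∫⁻ t in Ioi (1:ℝ), ENNReal.ofReal (t ^ ((n:ℝ) - 1) / (φ t) ^ 2) < ⊤) :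
    Integrable fun ξ : EuclideanSpace ℝ (Fin n) => (φ (jb ξ))⁻¹ ^ 2 := by
  have hint' : IntegrableOn (fun t => t ^ ((n:ℝ) - 1) / (φ t) ^ 2) (Ioi 1) := by
    refine ⟨(by fun_prop : Measurable _).aestronglyMeasurable,
      (hasFiniteIntegral_iff_ofReal ?_).2 hint⟩
    exact (ae_restrict_iff' measurableSet_Ioi).2 (ae_of_all _ fun t (ht : 1 < t) => by
      have := Real.rpow_nonneg (zero_le_one.trans ht.le) ((n:ℝ) - 1); positivity)
  have hbdd : ∀ r ∈ Ioc (0:ℝ) 1,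
      |(φ (Real.sqrt (1 + r ^ 2)))⁻¹ ^ 2| ≤ K ^ 2 * (φ 1)⁻¹ ^ 2 := fun r hr => by
    rw [abs_of_nonneg (by positivity)]
    simpa only [max_eq_right hr.2] using inv_sq_comp_sqrt_one_add_sq_le hpos hK hr.1.le
  have htail : IntegrableOn
      (fun r => r ^ ((n:ℝ) - 1) * (φ (Real.sqrt (1 + r ^ 2)))⁻¹ ^ 2) (Ioi 1) := by
    refine (hint'.const_mul (K ^ 2)).mono' (by fun_prop) ?_
    refine (ae_restrict_iff' measurableSet_Ioi).2 (ae_of_all _ fun r (hr : 1 < r) => ?_)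
    have := inv_sq_comp_sqrt_one_add_sq_le hpos hK (zero_le_one.trans hr.le)
    rw [max_eq_left hr.le] at this
    rw [norm_mul, Real.norm_of_nonneg (by positivity), Real.norm_of_nonneg (by positivity),
      div_eq_mul_inv, ← inv_pow]
    nlinarith [Real.rpow_nonneg (zero_le_one.trans hr.le) ((n:ℝ) - 1)]
  exact integrable_fun_norm_of_integrableOn_Ioi volume (by fun_prop) hbdd
    (by rwa [finrank_euclideanSpace_fin])

lemma norm_integral_exp_mul_I_smul_le {α : Type*} [MeasurableSpace α] (μ : Measure α)
    (θ : α → ℝ) (v : α → ℂ) :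
    ‖∫ ξ, Complex.exp (Complex.I * (θ ξ : ℂ)) • v ξ ∂μ‖ ≤
      (∫⁻ ξ, ENNReal.ofReal ‖v ξ‖ ∂μ).toReal := by
  refine (norm_integral_le_lintegral_norm _).trans_eq ?_
  simp_rw [norm_smul, mul_comm Complex.I, Complex.norm_exp_ofReal_mul_I, one_mul]

lemma toReal_lintegral_mul_le_sqrt_mul_sqrt {α : Type*} [MeasurableSpace α] {μ : Measure α}
    {f g : α → ℝ} (hf : AEMeasurable f μ) (hg : AEMeasurable g μ) (hf0 : ∀ x, 0 ≤ f x)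
    (hg0 : ∀ x, 0 ≤ g x) (hf2 : ∫⁻ x, ENNReal.ofReal (f x ^ 2) ∂μ ≠ ⊤)
    (hg2 : ∫⁻ x, ENNReal.ofReal (g x ^ 2) ∂μ ≠ ⊤) :
    (∫⁻ x, ENNReal.ofReal (f x * g x) ∂μ).toReal ≤
      Real.sqrt (∫⁻ x, ENNReal.ofReal (f x ^ 2) ∂μ).toReal *
        Real.sqrt (∫⁻ x, ENNReal.ofReal (g x ^ 2) ∂μ).toReal := by
  have hsq : ∀ {h : α → ℝ}, (∀ x, 0 ≤ h x) →
      ∫⁻ x, ENNReal.ofReal (h x) ^ (2:ℝ) ∂μ = ∫⁻ x, ENNReal.ofReal (h x ^ 2) ∂μ := by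
    intro h h0
    refine lintegral_congr fun x => ?_
    rw [ENNReal.ofReal_rpow_of_nonneg (h0 x) zero_le_two, Real.rpow_two]
  have hCS := ENNReal.lintegral_mul_le_Lp_mul_Lq μ Real.HolderConjugate.two_two
    hf.ennreal_ofReal hg.ennreal_ofReal
  simp only [Pi.mul_apply, ← ENNReal.ofReal_mul (hf0 _), hsq hf0, hsq hg0] at hCS
  refine (ENNReal.toReal_mono (by finiteness) hCS).trans_eq ?_
  rw [ENNReal.toReal_mul, ← ENNReal.toReal_rpow, ← ENNReal.toReal_rpow, Real.sqrt_eq_rpow,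
    Real.sqrt_eq_rpow, one_div]

lemma norm_integral_exp_mul_I_smul_le_sqrt_mul_sqrt {α : Type*} [MeasurableSpace α]
    (μ : Measure α) (θ : α → ℝ) {v : α → ℂ} {w : α → ℝ} (hv : Measurable v)
    (hw : Measurable w) (hw0 : ∀ ξ, 0 < w ξ)
    (hΦ : ∫⁻ ξ, ENNReal.ofReal ((w ξ)⁻¹ ^ 2) ∂μ ≠ ⊤)
    (hA : ∫⁻ ξ, ENNReal.ofReal (w ξ ^ 2 * ‖v ξ‖ ^ 2) ∂μ ≠ ⊤) :
    ‖∫ ξ, Complex.exp (Complex.I * (θ ξ : ℂ)) • v ξ ∂μ‖ ≤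
      Real.sqrt (∫⁻ ξ, ENNReal.ofReal ((w ξ)⁻¹ ^ 2) ∂μ).toReal *
        Real.sqrt (∫⁻ ξ, ENNReal.ofReal (w ξ ^ 2 * ‖v ξ‖ ^ 2) ∂μ).toReal := by
  have hCS := toReal_lintegral_mul_le_sqrt_mul_sqrt (f := fun ξ => (w ξ)⁻¹)
    (g := fun ξ => w ξ * ‖v ξ‖) hw.inv.aemeasurable (hw.mul hv.norm).aemeasurable
    (fun ξ => (inv_pos.2 (hw0 ξ)).le) (fun ξ => mul_nonneg (hw0 ξ).le (norm_nonneg _)) hΦ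
    (by simpa only [mul_pow] using hA)
  simp only [inv_mul_cancel_left₀ (hw0 _).ne', mul_pow] at hCS
  exact (norm_integral_exp_mul_I_smul_le μ θ v).trans hCS

/-- If φ is RO-varying at infinity and ∫₁^∞ t^{n-1}/φ(t)² dt < ∞, then every u ∈ H^φ(ℝⁿ)
satisfies ‖u‖_∞ ≤ C ‖u‖_{H^φ}: stated via the Fourier inversion formula, with v = û. -/
theorem stmt12 (n : ℕ) (φ : ℝ → ℝ)
    (hpos : ∀ t ≥ (1:ℝ), 0 < φ t)
    (hmeas : Measurable φ)
    (hRO : ∃ a > (1:ℝ), ∃ c ≥ (1:ℝ), ∀ t ≥ (1:ℝ), ∀ l ∈ Set.Icc (1:ℝ) a,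
      c⁻¹ ≤ φ (l * t) / φ t ∧ φ (l * t) / φ t ≤ c)
    (hint : ∫⁻ t in Set.Ioi (1:ℝ),
        ENNReal.ofReal (t ^ ((n:ℝ) - 1) / (φ t) ^ 2) < ⊤) :
    ∃ C > (0:ℝ), ∀ v : EuclideanSpace ℝ (Fin n) → ℂ, Measurable v →
      (∫⁻ ξ, ENNReal.ofReal ((φ (jb ξ)) ^ 2 * ‖v ξ‖ ^ 2)) < ⊤ →
      ∀ x : EuclideanSpace ℝ (Fin n),
        ‖(2 * Real.pi) ^ (-(n:ℝ)) •
            ∫ ξ, Complex.exp (Complex.I * ((inner ℝ x ξ : ℝ) : ℂ)) • v ξ‖ ≤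
          C * Real.sqrt (∫⁻ ξ, ENNReal.ofReal ((φ (jb ξ)) ^ 2 * ‖v ξ‖ ^ 2)).toReal := by
  obtain ⟨a, ha, c, hc, hac⟩ := hRO
  have hφ_le : ∀ t ≥ (1:ℝ), ∀ l ∈ Icc 1 a, φ t ≤ c * φ (l * t) := fun t ht l hl =>
    (inv_mul_le_iff₀ (by positivity)).1 ((le_div_iff₀ (hpos t ht)).1 (hac t ht l hl).1)
  obtain ⟨K, hK⟩ :=
    exists_le_mul_of_le_mul_of_mem_Icc ha (by positivity) hφ_le (Real.sqrt 2)
  have hΦ := integrable_inv_sq_comp_jb hpos hmeas hK hint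
  set Φ := ∫⁻ ξ : EuclideanSpace ℝ (Fin n), ENNReal.ofReal ((φ (jb ξ))⁻¹ ^ 2)
  refine ⟨(2 * Real.pi) ^ (-(n:ℝ)) * Real.sqrt Φ.toReal + 1, by positivity,
    fun v hv hA x => ?_⟩
  set A := ∫⁻ ξ, ENNReal.ofReal ((φ (jb ξ)) ^ 2 * ‖v ξ‖ ^ 2)
  calc _ = (2 * Real.pi) ^ (-(n:ℝ)) *
        ‖∫ ξ, Complex.exp (Complex.I * ((inner ℝ x ξ : ℝ) : ℂ)) • v ξ‖ := by
        rw [norm_smul, Real.norm_of_nonneg (by positivity)]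
    _ ≤ (2 * Real.pi) ^ (-(n:ℝ)) * (Real.sqrt Φ.toReal * Real.sqrt A.toReal) := by
        gcongr
        exact norm_integral_exp_mul_I_smul_le_sqrt_mul_sqrt _ _ hv
          (hmeas.comp (by unfold jb; fun_prop)) (fun ξ => hpos _ (one_le_sqrt_one_add_sq ‖ξ‖))
          hΦ.lintegral_lt_top.ne hA.ne
    _ ≤ _ := by
        rw [← mul_assoc]
        gcongr
        exact le_add_of_nonneg_right zero_le_one
end

section
/- Let φ be RO-varying at infinity. Then the map u ↦ (u, ·)_{L²} extends to an isometric (up to equivalent norms) isomorphism between H^φ(ℝⁿ) and the anti-dual of H^{1/φ}(ℝⁿ): for every continuous antilinear functional ℓ on H^{1/φ}(ℝⁿ) there exists a unique u ∈ H^φ(ℝⁿ) with ℓ(v) = ∫ û(ξ) \overline{v̂(ξ)} dξ (2π)^{-n} for all v ∈ H^{1/φ}(ℝⁿ), and the norms are comparable. -/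
open MeasureTheory
open scoped ENNReal

/-- The squared H^w-norm on the Fourier side: ∫ w(⟨ξ⟩)² |v(ξ)|² dξ, where v = û. -/
noncomputable def wnormSq (n : ℕ) (w : ℝ → ℝ) (v : EuclideanSpace ℝ (Fin n) → ℂ) : ℝ≥0∞ :=
  ∫⁻ ξ, ENNReal.ofReal ((w (jb ξ)) ^ 2 * ‖v ξ‖ ^ 2)

/-- Membership in H^w(ℝⁿ), on the Fourier side. -/
def memH (n : ℕ) (w : ℝ → ℝ) (v : EuclideanSpace ℝ (Fin n) → ℂ) : Prop :=
  Measurable v ∧ wnormSq n w v < ⊤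

/-!
On the Fourier side, `v ↦ v / φ(⟨ξ⟩)` maps `H^{1/φ}` isometrically onto `L²` and
`u ↦ φ(⟨ξ⟩) u` maps `H^φ` isometrically onto `L²`, and these two maps turn the pairing
`∫ u v̄` into the `L²` inner product. The theorem is therefore the Riesz representation theorem
on `L²` transported along the weights; the factor `(2π)^{-n}` is absorbed into `C = (2π)^n`.
-/

open scoped ComplexConjugate InnerProductSpace

section MulWeight

variable {n : ℕ}

lemma one_le_jb (ξ : EuclideanSpace ℝ (Fin n)) : 1 ≤ jb ξ :=
  Real.one_le_sqrt.mpr (le_add_of_nonneg_right (sq_nonneg _))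

lemma measurable_jb : Measurable (jb (n := n)) := by
  unfold jb
  fun_prop

/-- The Fourier-side form of the multiplier `w(⟨D⟩)`. -/
noncomputable def mulWeight (w : ℝ → ℝ) (v : EuclideanSpace ℝ (Fin n) → ℂ) :
    EuclideanSpace ℝ (Fin n) → ℂ :=
  fun ξ => (w (jb ξ) : ℂ) * v ξ

@[simp]
lemma mulWeight_apply (w : ℝ → ℝ) (v : EuclideanSpace ℝ (Fin n) → ℂ) (ξ) :
    mulWeight w v ξ = (w (jb ξ) : ℂ) * v ξ :=
  rfl

lemma Measurable.mulWeight {w : ℝ → ℝ} {v : EuclideanSpace ℝ (Fin n) → ℂ} (hw : Measurable w)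
    (hv : Measurable v) : Measurable (mulWeight w v) :=
  (Complex.measurable_ofReal.comp (hw.comp measurable_jb)).mul hv

lemma mulWeight_mulWeight (w k : ℝ → ℝ) (v : EuclideanSpace ℝ (Fin n) → ℂ) :
    mulWeight w (mulWeight k v) = mulWeight (fun t => w t * k t) v := by
  ext ξ
  simp only [mulWeight_apply, Complex.ofReal_mul]
  ring

lemma mulWeight_congr {w k : ℝ → ℝ} (h : ∀ t ≥ 1, w t = k t) (v : EuclideanSpace ℝ (Fin n) → ℂ) :
    mulWeight w v = mulWeight k v := by
  ext ξ
  simp only [mulWeight_apply, h _ (one_le_jb ξ)]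

lemma mulWeight_one (v : EuclideanSpace ℝ (Fin n) → ℂ) : mulWeight (fun _ => 1) v = v := by
  ext ξ
  simp

variable {φ : ℝ → ℝ}

lemma mulWeight_inv_mulWeight (hφ : ∀ t ≥ 1, φ t ≠ 0) (v : EuclideanSpace ℝ (Fin n) → ℂ) :
    mulWeight (fun t => (φ t)⁻¹) (mulWeight φ v) = v := by
  rw [mulWeight_mulWeight, mulWeight_congr (k := fun _ => 1) fun t ht => inv_mul_cancel₀ (hφ t ht),
    mulWeight_one]

lemma mulWeight_mulWeight_inv (hφ : ∀ t ≥ 1, φ t ≠ 0) (v : EuclideanSpace ℝ (Fin n) → ℂ) :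
    mulWeight φ (mulWeight (fun t => (φ t)⁻¹) v) = v := by
  rw [mulWeight_mulWeight, mulWeight_congr (k := fun _ => 1) fun t ht => mul_inv_cancel₀ (hφ t ht),
    mulWeight_one]

end MulWeight

section WeightedNorm

variable {n : ℕ} {w φ : ℝ → ℝ} {v : EuclideanSpace ℝ (Fin n) → ℂ}

lemma wnormSq_eq_eLpNorm_sq :
    wnormSq n w v = eLpNorm (mulWeight w v) 2 volume ^ 2 := by
  have hpt : ∀ ξ, ENNReal.ofReal (w (jb ξ) ^ 2 * ‖v ξ‖ ^ 2) = ‖mulWeight w v ξ‖ₑ ^ (2 : ℝ) := by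
    intro ξ
    rw [ENNReal.rpow_two, ← ofReal_norm, ← ENNReal.ofReal_pow (norm_nonneg _), mulWeight_apply,
      norm_mul, Complex.norm_real, mul_pow, Real.norm_eq_abs, sq_abs]
  rw [wnormSq, lintegral_congr hpt, eLpNorm_eq_lintegral_rpow_enorm_toReal two_ne_zero
    ENNReal.ofNat_ne_top, ← ENNReal.rpow_natCast, ← ENNReal.rpow_mul]
  norm_num

lemma memH_iff_memLp (hw : Measurable w) :
    memH n w v ↔ Measurable v ∧ MemLp (mulWeight w v) 2 volume := by
  refine and_congr_right fun hv => ?_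
  rw [wnormSq_eq_eLpNorm_sq, ENNReal.pow_lt_top_iff]
  simp only [OfNat.ofNat_ne_zero, or_false]
  exact ⟨fun h => ⟨(hw.mulWeight hv).aestronglyMeasurable, h⟩, fun h => h.2⟩

lemma sqrt_wnormSq_eq_norm_toLp (h : MemLp (mulWeight w v) 2 volume) :
    Real.sqrt (wnormSq n w v).toReal = ‖h.toLp‖ := by
  rw [Lp.norm_toLp, wnormSq_eq_eLpNorm_sq, ENNReal.toReal_pow, Real.sqrt_sq ENNReal.toReal_nonneg]

lemma wnormSq_congr_ae {v' : EuclideanSpace ℝ (Fin n) → ℂ} (h : v =ᵐ[volume] v') :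
    wnormSq n w v = wnormSq n w v' :=
  lintegral_congr_ae (h.mono fun ξ hξ => by simp only [hξ])

lemma wnormSq_smul (c : ℂ) :
    wnormSq n w (c • v) = ‖c‖ₑ ^ 2 * wnormSq n w v := by
  have : mulWeight w (c • v) = c • mulWeight w v := by
    ext ξ
    simp only [mulWeight_apply, Pi.smul_apply, smul_eq_mul]
    ring
  rw [wnormSq_eq_eLpNorm_sq, wnormSq_eq_eLpNorm_sq, this, eLpNorm_const_smul, mul_pow]

lemma memH.const_smul (hv : memH n w v) (c : ℂ) : memH n w (c • v) :=
  ⟨hv.1.const_smul c, by rw [wnormSq_smul]; exact ENNReal.mul_lt_top (by simp) hv.2⟩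

lemma sqrt_wnormSq_smul (c : ℂ) :
    Real.sqrt (wnormSq n w (c • v)).toReal = ‖c‖ * Real.sqrt (wnormSq n w v).toReal := by
  rw [wnormSq_smul, ENNReal.toReal_mul, ENNReal.toReal_pow, toReal_enorm,
    Real.sqrt_mul (sq_nonneg _), Real.sqrt_sq (norm_nonneg _)]

lemma wnormSq_inv_mulWeight (hφ : ∀ t ≥ 1, φ t ≠ 0) :
    wnormSq n (fun t => (φ t)⁻¹) (mulWeight φ v) = eLpNorm v 2 volume ^ 2 := by
  rw [wnormSq_eq_eLpNorm_sq, mulWeight_inv_mulWeight hφ]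

lemma memH_inv_mulWeight_Lp (hφ : ∀ t ≥ 1, φ t ≠ 0) (hφm : Measurable φ)
    (f : Lp ℂ 2 (volume : Measure (EuclideanSpace ℝ (Fin n)))) :
    memH n (fun t => (φ t)⁻¹) (mulWeight φ f) :=
  ⟨hφm.mulWeight (Lp.stronglyMeasurable f).measurable, by
    rw [wnormSq_inv_mulWeight hφ]; exact ENNReal.pow_lt_top (Lp.eLpNorm_lt_top f)⟩

lemma sqrt_wnormSq_inv_mulWeight_Lp (hφ : ∀ t ≥ 1, φ t ≠ 0)
    (f : Lp ℂ 2 (volume : Measure (EuclideanSpace ℝ (Fin n)))) :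
    Real.sqrt (wnormSq n (fun t => (φ t)⁻¹) (mulWeight φ f)).toReal = ‖f‖ := by
  rw [wnormSq_inv_mulWeight hφ, ENNReal.toReal_pow, Real.sqrt_sq ENNReal.toReal_nonneg, Lp.norm_def]

end WeightedNorm

section Pairing

variable {n : ℕ} {φ : ℝ → ℝ} {u v : EuclideanSpace ℝ (Fin n) → ℂ}

lemma integral_mul_conj_eq_inner (hφ : ∀ t ≥ 1, φ t ≠ 0) (hu : MemLp (mulWeight φ u) 2 volume)
    (hv : MemLp (mulWeight (fun t => (φ t)⁻¹) v) 2 volume) :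
    ∫ ξ, u ξ * conj (v ξ) = ⟪hv.toLp, hu.toLp⟫_ℂ := by
  rw [L2.inner_def]
  refine integral_congr_ae ?_
  filter_upwards [hu.coeFn_toLp, hv.coeFn_toLp] with ξ hu' hv'
  have hφξ : (φ (jb ξ) : ℂ) ≠ 0 := mod_cast hφ _ (one_le_jb ξ)
  rw [RCLike.inner_apply, hu', hv', mulWeight_apply, mulWeight_apply, map_mul, Complex.conj_ofReal]
  push_cast
  field_simp

lemma norm_integral_mul_conj_le (hφ : ∀ t ≥ 1, φ t ≠ 0) (hφm : Measurable φ) (hu : memH n φ u)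
    (hv : memH n (fun t => (φ t)⁻¹) v) :
    ‖∫ ξ, u ξ * conj (v ξ)‖ ≤
      Real.sqrt (wnormSq n φ u).toReal * Real.sqrt (wnormSq n (fun t => (φ t)⁻¹) v).toReal := by
  obtain ⟨-, hu⟩ := (memH_iff_memLp hφm).mp hu
  obtain ⟨-, hv⟩ := (memH_iff_memLp (w := fun t => (φ t)⁻¹) hφm.inv).mp hv
  rw [integral_mul_conj_eq_inner hφ hu hv, sqrt_wnormSq_eq_norm_toLp hu,
    sqrt_wnormSq_eq_norm_toLp hv, mul_comm]
  exact norm_inner_le_norm _ _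

lemma ae_eq_of_forall_integral_mul_conj_eq (hφ : ∀ t ≥ 1, φ t ≠ 0) (hφm : Measurable φ)
    {u' : EuclideanSpace ℝ (Fin n) → ℂ} (hu : memH n φ u) (hu' : memH n φ u')
    (h : ∀ v, memH n (fun t => (φ t)⁻¹) v → ∫ ξ, u ξ * conj (v ξ) = ∫ ξ, u' ξ * conj (v ξ)) :
    u =ᵐ[volume] u' := by
  obtain ⟨-, hu⟩ := (memH_iff_memLp hφm).mp hu
  obtain ⟨-, hu'⟩ := (memH_iff_memLp hφm).mp hu'
  have hLp : hu.toLp = hu'.toLp := by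
    refine ext_inner_left ℂ fun f => ?_
    obtain ⟨-, hf⟩ := (memH_iff_memLp (w := fun t => (φ t)⁻¹) hφm.inv).mp
      (memH_inv_mulWeight_Lp hφ hφm f)
    have hf_toLp : hf.toLp = f := by
      rw [MemLp.toLp_congr hf (Lp.memLp f) (.of_eq (mulWeight_inv_mulWeight hφ _)), Lp.toLp_coeFn]
    rw [← hf_toLp, ← integral_mul_conj_eq_inner hφ hu hf, ← integral_mul_conj_eq_inner hφ hu' hf,
      h _ (memH_inv_mulWeight_Lp hφ hφm f)]
  rw [← mulWeight_inv_mulWeight hφ u, ← mulWeight_inv_mulWeight hφ u']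
  filter_upwards [(MemLp.toLp_eq_toLp_iff hu hu').mp hLp] with ξ hξ
  simp only [mulWeight_apply] at hξ ⊢
  rw [hξ]

end Pairing

instance nontrivial_Lp_euclideanSpace {n : ℕ} :
    Nontrivial (Lp ℂ 2 (volume : Measure (EuclideanSpace ℝ (Fin n)))) := by
  refine nontrivial_of_ne (indicatorConstLp 2 (s := Metric.closedBall 0 1) measurableSet_closedBall
    measure_closedBall_lt_top.ne (1 : ℂ)) 0 fun h => ?_
  have hnorm := congrArg norm h
  rw [norm_indicatorConstLp two_ne_zero ENNReal.ofNat_ne_top, norm_zero, norm_one, one_mul] at hnorm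
  have hball : 0 < volume.real (Metric.closedBall (0 : EuclideanSpace ℝ (Fin n)) 1) :=
    ENNReal.toReal_pos (Metric.measure_closedBall_pos _ _ one_pos).ne' measure_closedBall_lt_top.ne
  exact (Real.rpow_pos_of_pos hball _).ne' hnorm

structure IsBoundedAntilinearOn (n : ℕ) (w : ℝ → ℝ) (ℓ : (EuclideanSpace ℝ (Fin n) → ℂ) → ℂ)
    (M : ℝ) : Prop where
  map_add : ∀ v v', memH n w v → memH n w v' → ℓ (v + v') = ℓ v + ℓ v'
  map_smul : ∀ (c : ℂ) v, memH n w v → ℓ (c • v) = conj c * ℓ v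
  norm_le : ∀ v, memH n w v → ‖ℓ v‖ ≤ M * Real.sqrt (wnormSq n w v).toReal

namespace IsBoundedAntilinearOn

variable {n : ℕ} {w φ : ℝ → ℝ} {ℓ : (EuclideanSpace ℝ (Fin n) → ℂ) → ℂ} {M : ℝ}

lemma map_congr_ae (hℓ : IsBoundedAntilinearOn n w ℓ M) {v v' : EuclideanSpace ℝ (Fin n) → ℂ}
    (hv : memH n w v) (hv' : Measurable v') (h : v =ᵐ[volume] v') : ℓ v = ℓ v' := by
  have hd0 : wnormSq n w (v' - v) = 0 := by
    rw [wnormSq_congr_ae h.symm.sub_eq]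
    simp [wnormSq]
  have hd : memH n w (v' - v) := ⟨hv'.sub hv.1, by simp [hd0]⟩
  have hℓd : ℓ (v' - v) = 0 := norm_le_zero_iff.mp <| by simpa [hd0] using hℓ.norm_le _ hd
  rw [← add_sub_cancel v v', hℓ.map_add _ _ hv hd, hℓd, add_zero]

lemma exists_inner_eq (hφ : ∀ t ≥ 1, φ t ≠ 0) (hφm : Measurable φ)
    (hℓ : IsBoundedAntilinearOn n (fun t => (φ t)⁻¹) ℓ M) :
    ∃ g : Lp ℂ 2 (volume : Measure (EuclideanSpace ℝ (Fin n))), ‖g‖ ≤ M ∧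
      ∀ f : Lp ℂ 2 (volume : Measure (EuclideanSpace ℝ (Fin n))),
        ℓ (mulWeight φ f) = ⟪f, g⟫_ℂ := by
  have hV := memH_inv_mulWeight_Lp (n := n) hφ hφm
  let L : Lp ℂ 2 (volume : Measure (EuclideanSpace ℝ (Fin n))) →ₗ[ℂ] ℂ :=
    { toFun := fun f => conj (ℓ (mulWeight φ f))
      map_add' := fun f f' => by
        have h : mulWeight φ ⇑(f + f') =ᵐ[volume] mulWeight φ f + mulWeight φ f' := by
          filter_upwards [Lp.coeFn_add f f'] with ξ hξ
          simp only [mulWeight_apply, Pi.add_apply, hξ, mul_add]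
        rw [hℓ.map_congr_ae (hV _) ((hV f).1.add (hV f').1) h, hℓ.map_add _ _ (hV f) (hV f'),
          _root_.map_add]
      map_smul' := fun c f => by
        have h : mulWeight φ ⇑(c • f) =ᵐ[volume] c • mulWeight φ f := by
          filter_upwards [Lp.coeFn_smul c f] with ξ hξ
          simp only [mulWeight_apply, Pi.smul_apply, hξ, smul_eq_mul]
          ring
        rw [hℓ.map_congr_ae (hV _) ((hV f).1.const_smul c) h, hℓ.map_smul _ _ (hV f), map_mul,
          Complex.conj_conj, RingHom.id_apply, smul_eq_mul] }
  have hL : ∀ f, ‖L f‖ ≤ M * ‖f‖ := fun f => by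
    change ‖conj (ℓ (mulWeight φ f))‖ ≤ M * ‖f‖
    rw [RCLike.norm_conj, ← sqrt_wnormSq_inv_mulWeight_Lp hφ f]
    exact hℓ.norm_le _ (hV f)
  have hM : 0 ≤ M := by
    obtain ⟨f, hf⟩ := exists_ne (0 : Lp ℂ 2 (volume : Measure (EuclideanSpace ℝ (Fin n))))
    exact nonneg_of_mul_nonneg_left ((norm_nonneg _).trans (hL f)) (norm_pos_iff.mpr hf)
  refine ⟨(InnerProductSpace.toDual ℂ _).symm (L.mkContinuous M hL), ?_, fun f => ?_⟩
  · rw [LinearIsometryEquiv.norm_map]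
    exact L.mkContinuous_norm_le hM hL
  · rw [← inner_conj_symm, InnerProductSpace.toDual_symm_apply, LinearMap.mkContinuous_apply]
    exact (Complex.conj_conj _).symm

lemma exists_representation (hφ : ∀ t ≥ 1, φ t ≠ 0) (hφm : Measurable φ)
    (hℓ : IsBoundedAntilinearOn n (fun t => (φ t)⁻¹) ℓ M) :
    ∃ u, memH n φ u ∧ Real.sqrt (wnormSq n φ u).toReal ≤ M ∧
      ∀ v, memH n (fun t => (φ t)⁻¹) v → ℓ v = ∫ ξ, u ξ * conj (v ξ) := by
  obtain ⟨g, hgM, hg⟩ := hℓ.exists_inner_eq hφ hφm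
  have hψm : Measurable fun t => (φ t)⁻¹ := hφm.inv
  have hφu : mulWeight φ (mulWeight (fun t => (φ t)⁻¹) g) = g := mulWeight_mulWeight_inv hφ g
  have hu : MemLp (mulWeight φ (mulWeight (fun t => (φ t)⁻¹) g)) 2 volume := by
    rw [hφu]; exact Lp.memLp g
  have hu_toLp : hu.toLp = g := by
    rw [MemLp.toLp_congr hu (Lp.memLp g) (.of_eq hφu), Lp.toLp_coeFn]
  refine ⟨mulWeight (fun t => (φ t)⁻¹) g,
    (memH_iff_memLp hφm).mpr ⟨hψm.mulWeight (Lp.stronglyMeasurable g).measurable, hu⟩, ?_,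
    fun v hv => ?_⟩
  · rwa [sqrt_wnormSq_eq_norm_toLp hu, hu_toLp]
  · obtain ⟨-, hv2⟩ := (memH_iff_memLp hψm).mp hv
    rw [integral_mul_conj_eq_inner hφ hu hv2, hu_toLp, ← hg]
    refine hℓ.map_congr_ae hv (memH_inv_mulWeight_Lp hφ hφm _).1 ?_
    conv_lhs => rw [← mulWeight_mulWeight_inv hφ v]
    filter_upwards [hv2.coeFn_toLp] with ξ hξ
    simp only [mulWeight_apply, hξ]

end IsBoundedAntilinearOn

theorem stmt18_general (n : ℕ) (φ : ℝ → ℝ)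
    (hpos : ∀ t ≥ (1:ℝ), 0 < φ t)
    (hmeas : Measurable φ) :
    ∃ C > (0:ℝ), ∀ (ℓ : (EuclideanSpace ℝ (Fin n) → ℂ) → ℂ) (M : ℝ),
      (∀ v w, memH n (fun t => (φ t)⁻¹) v → memH n (fun t => (φ t)⁻¹) w →
        ℓ (v + w) = ℓ v + ℓ w) →
      (∀ (c : ℂ) v, memH n (fun t => (φ t)⁻¹) v →
        ℓ (c • v) = (starRingEnd ℂ) c * ℓ v) →
      (∀ v, memH n (fun t => (φ t)⁻¹) v →
        ‖ℓ v‖ ≤ M * Real.sqrt (wnormSq n (fun t => (φ t)⁻¹) v).toReal) →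
      ∃ u : EuclideanSpace ℝ (Fin n) → ℂ,
        memH n φ u ∧
        (∀ v, memH n (fun t => (φ t)⁻¹) v →
          ℓ v = ((((2 * Real.pi) ^ (-(n:ℝ)) : ℝ)) : ℂ) * ∫ ξ, u ξ * (starRingEnd ℂ) (v ξ)) ∧
        Real.sqrt (wnormSq n φ u).toReal ≤ C * M ∧
        (∀ v, memH n (fun t => (φ t)⁻¹) v →
          ‖ℓ v‖ ≤ C * Real.sqrt (wnormSq n φ u).toReal *
            Real.sqrt (wnormSq n (fun t => (φ t)⁻¹) v).toReal) ∧
        (∀ u' : EuclideanSpace ℝ (Fin n) → ℂ, memH n φ u' →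
          (∀ v, memH n (fun t => (φ t)⁻¹) v →
            ℓ v = ((((2 * Real.pi) ^ (-(n:ℝ)) : ℝ)) : ℂ) * ∫ ξ, u' ξ * (starRingEnd ℂ) (v ξ)) →
          u' =ᵐ[volume] u) := by
  have hφ : ∀ t ≥ (1:ℝ), φ t ≠ 0 := fun t ht => (hpos t ht).ne'
  set κ : ℝ := (2 * Real.pi) ^ (n : ℝ)
  have hκ : 1 ≤ κ := Real.one_le_rpow (by linarith [Real.pi_gt_three]) n.cast_nonneg
  have hκ_inv : (((2 * Real.pi) ^ (-(n:ℝ)) : ℝ) : ℂ) * κ = 1 := by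
    rw [← Complex.ofReal_mul, Real.rpow_neg (by positivity), inv_mul_cancel₀ (by positivity),
      Complex.ofReal_one]
  refine ⟨κ, by linarith, fun ℓ M hadd hsmul hbound => ?_⟩
  obtain ⟨u, hu, huM, hrep⟩ :=
    (IsBoundedAntilinearOn.mk hadd hsmul hbound).exists_representation hφ hmeas
  have hsqrt : Real.sqrt (wnormSq n φ ((κ : ℂ) • u)).toReal =
      κ * Real.sqrt (wnormSq n φ u).toReal := by
    rw [sqrt_wnormSq_smul, Complex.norm_real, Real.norm_of_nonneg (by linarith)]
  have hrep_κ : ∀ v, memH n (fun t => (φ t)⁻¹) v → ℓ v =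
      (((2 * Real.pi) ^ (-(n:ℝ)) : ℝ) : ℂ) * ∫ ξ, ((κ : ℂ) • u) ξ * conj (v ξ) := by
    intro v hv
    simp only [Pi.smul_apply, smul_eq_mul, mul_assoc, integral_const_mul]
    rw [← mul_assoc, hκ_inv, one_mul, hrep v hv]
  refine ⟨(κ : ℂ) • u, hu.const_smul _, hrep_κ, ?_, fun v hv => ?_, fun u' hu' hrep' => ?_⟩
  · rw [hsqrt]
    gcongr
  · calc ‖ℓ v‖ = ‖∫ ξ, u ξ * conj (v ξ)‖ := by rw [hrep v hv]
      _ ≤ Real.sqrt (wnormSq n φ u).toReal * Real.sqrt (wnormSq n (fun t => (φ t)⁻¹) v).toReal :=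
        norm_integral_mul_conj_le hφ hmeas hu hv
      _ ≤ κ * (κ * Real.sqrt (wnormSq n φ u).toReal) *
          Real.sqrt (wnormSq n (fun t => (φ t)⁻¹) v).toReal := by
        have hS := Real.sqrt_nonneg (wnormSq n φ u).toReal
        gcongr
        exact (le_mul_of_one_le_left hS hκ).trans
          (le_mul_of_one_le_left (mul_nonneg (by linarith) hS) hκ)
      _ = _ := by rw [hsqrt]
  · have hc : (((2 * Real.pi) ^ (-(n:ℝ)) : ℝ) : ℂ) ≠ 0 := left_ne_zero_of_mul_eq_one hκ_inv
    exact ae_eq_of_forall_integral_mul_conj_eq hφ hmeas hu' (hu.const_smul _)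
      fun v hv => mul_left_cancel₀ hc ((hrep' v hv).symm.trans (hrep_κ v hv))

/-- Duality: for φ RO-varying, every continuous antilinear functional ℓ on H^{1/φ}(ℝⁿ)
is represented by a unique u ∈ H^φ(ℝⁿ) via the extended L² pairing
ℓ(v) = (2π)^{-n} ∫ û(ξ) conj(v̂(ξ)) dξ, with comparable norms.  Everything is stated on
the Fourier side, identifying u with û and v with v̂. -/
theorem stmt18 (n : ℕ) (φ : ℝ → ℝ)
    (hpos : ∀ t ≥ (1:ℝ), 0 < φ t)
    (hmeas : Measurable φ)
    (hRO : ∃ a > (1:ℝ), ∃ c ≥ (1:ℝ), ∀ t ≥ (1:ℝ), ∀ l ∈ Set.Icc (1:ℝ) a,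
      c⁻¹ ≤ φ (l * t) / φ t ∧ φ (l * t) / φ t ≤ c) :
    ∃ C > (0:ℝ), ∀ (ℓ : (EuclideanSpace ℝ (Fin n) → ℂ) → ℂ) (M : ℝ),
      (∀ v w, memH n (fun t => (φ t)⁻¹) v → memH n (fun t => (φ t)⁻¹) w →
        ℓ (v + w) = ℓ v + ℓ w) →
      (∀ (c : ℂ) v, memH n (fun t => (φ t)⁻¹) v →
        ℓ (c • v) = (starRingEnd ℂ) c * ℓ v) →
      (∀ v, memH n (fun t => (φ t)⁻¹) v →
        ‖ℓ v‖ ≤ M * Real.sqrt (wnormSq n (fun t => (φ t)⁻¹) v).toReal) →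
      ∃ u : EuclideanSpace ℝ (Fin n) → ℂ,
        memH n φ u ∧
        (∀ v, memH n (fun t => (φ t)⁻¹) v →
          ℓ v = ((((2 * Real.pi) ^ (-(n:ℝ)) : ℝ)) : ℂ) * ∫ ξ, u ξ * (starRingEnd ℂ) (v ξ)) ∧
        Real.sqrt (wnormSq n φ u).toReal ≤ C * M ∧
        (∀ v, memH n (fun t => (φ t)⁻¹) v →
          ‖ℓ v‖ ≤ C * Real.sqrt (wnormSq n φ u).toReal *
            Real.sqrt (wnormSq n (fun t => (φ t)⁻¹) v).toReal) ∧
        (∀ u' : EuclideanSpace ℝ (Fin n) → ℂ, memH n φ u' →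
          (∀ v, memH n (fun t => (φ t)⁻¹) v →
            ℓ v = ((((2 * Real.pi) ^ (-(n:ℝ)) : ℝ)) : ℂ) * ∫ ξ, u' ξ * (starRingEnd ℂ) (v ξ)) →
          u' =ᵐ[volume] u) :=
  stmt18_general n φ hpos hmeas
end

section
/- Let ψ ∈ 𝓑 and suppose ψ is pseudoconcave in a neighborhood of infinity, i.e., there is a concave function ψ₁ : (c,∞) → (0,∞) with ψ/ψ₁ and ψ₁/ψ bounded on (c,∞). Then for fixed s₀ < s₁, the function φ(t) := t^{s₀} ψ(t^{s₁−s₀}) (t ≥ 1) satisfies the RO condition: there is c' ≥ 1 with c'⁻¹ λ^{s₀} ≤ φ(λt)/φ(t) ≤ c' λ^{s₁} for all t ≥ 1, λ ≥ 1. -/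
/-!
A positive concave function `f` on a ray `(c, ∞)` is nondecreasing and grows at most linearly,
so `τ ↦ f (max τ b)` satisfies the RO condition with exponents `0` and `1`. Since `ψ` is bounded
above on `[1, b]` and away from `0` on `[1, ∞)`, it is comparable to that function on `[1, ∞)` and
inherits the condition; the substitution `t ↦ t ^ (s₁ - s₀)` together with the factor `t ^ s₀`
then turns the exponents `0, 1` into `s₀, s₁`.
-/

open Set

def SatisfiesRO (φ : ℝ → ℝ) (s₀ s₁ C : ℝ) : Prop :=
  ∀ t ≥ (1:ℝ), ∀ l ≥ (1:ℝ), C⁻¹ * l ^ s₀ ≤ φ (l * t) / φ t ∧ φ (l * t) / φ t ≤ C * l ^ s₁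

namespace SatisfiesRO

theorem one_le {φ : ℝ → ℝ} {s₀ s₁ C : ℝ} (hφ : SatisfiesRO φ s₀ s₁ C) (h₁ : φ 1 ≠ 0) :
    1 ≤ C := by
  have := (hφ 1 le_rfl 1 le_rfl).2
  rwa [one_mul, div_self h₁, Real.one_rpow, mul_one] at this

theorem of_comparable {φ g : ℝ → ℝ} {s₀ s₁ C K : ℝ} (hg : SatisfiesRO g s₀ s₁ C)
    (hφpos : ∀ t ≥ (1:ℝ), 0 < φ t) (hgpos : ∀ t ≥ (1:ℝ), 0 < g t)
    (hK : ∀ t ≥ (1:ℝ), φ t / g t ≤ K ∧ g t / φ t ≤ K) :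
    SatisfiesRO φ s₀ s₁ (K ^ 2 * C) := by
  intro t ht l hl
  have hlt : 1 ≤ l * t := one_le_mul_of_one_le_of_one_le hl ht
  have hC : 0 < C := one_pos.trans_le (hg.one_le (hgpos 1 le_rfl).ne')
  have hsplit : φ (l * t) / φ t = φ (l * t) / g (l * t) * (g (l * t) / g t) * (g t / φ t) := by
    have := (hφpos t ht).ne'; have := (hgpos t ht).ne'; have := (hgpos _ hlt).ne'
    field_simp
  have hinv : ∀ {x y : ℝ}, 0 < x → 0 < y → y / x ≤ K → K⁻¹ ≤ x / y := fun hx hy h ↦ by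
    rw [← inv_div]; exact inv_anti₀ (div_pos hy hx) h
  have hφg : 0 < φ (l * t) / g (l * t) := div_pos (hφpos _ hlt) (hgpos _ hlt)
  have hgφ : 0 < g t / φ t := div_pos (hgpos t ht) (hφpos t ht)
  have hgg : 0 < g (l * t) / g t := div_pos (hgpos _ hlt) (hgpos t ht)
  have hK0 : 0 < K := hgφ.trans_le (hK t ht).2
  obtain ⟨hlo, hhi⟩ := hg t ht l hl
  have hφg_le := (hK _ hlt).1
  have hφg_ge := hinv (hφpos _ hlt) (hgpos _ hlt) (hK _ hlt).2
  have hgφ_le := (hK t ht).2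
  have hgφ_ge := hinv (hgpos t ht) (hφpos t ht) (hK t ht).1
  rw [hsplit]
  constructor
  · calc (K ^ 2 * C)⁻¹ * l ^ s₀ = K⁻¹ * (C⁻¹ * l ^ s₀) * K⁻¹ := by ring
      _ ≤ _ := by gcongr
  · calc _ ≤ K * (C * l ^ s₁) * K := by gcongr
      _ = K ^ 2 * C * l ^ s₁ := by ring

theorem comp_rpow {ψ : ℝ → ℝ} {a b C s₀ σ : ℝ} (hψ : SatisfiesRO ψ a b C) (hσ : 0 ≤ σ) :
    SatisfiesRO (fun t ↦ t ^ s₀ * ψ (t ^ σ)) (s₀ + σ * a) (s₀ + σ * b) C := by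
  intro t ht l hl
  have hl0 : 0 < l := one_pos.trans_le hl
  have ht0 : 0 < t := one_pos.trans_le ht
  obtain ⟨hlo, hhi⟩ := hψ _ (Real.one_le_rpow ht hσ) _ (Real.one_le_rpow hl hσ)
  have hratio : (l * t) ^ s₀ * ψ ((l * t) ^ σ) / (t ^ s₀ * ψ (t ^ σ)) =
      l ^ s₀ * (ψ (l ^ σ * t ^ σ) / ψ (t ^ σ)) := by
    rw [Real.mul_rpow hl0.le ht0.le, Real.mul_rpow hl0.le ht0.le, mul_comm (l ^ s₀), mul_assoc,
      mul_div_mul_left _ _ (Real.rpow_pos_of_pos ht0 s₀).ne', mul_div_assoc]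
  have hpow : ∀ e, l ^ (s₀ + σ * e) = l ^ s₀ * (l ^ σ) ^ e := fun e => by
    rw [Real.rpow_add hl0, Real.rpow_mul hl0.le]
  have hls₀ : 0 ≤ l ^ s₀ := (Real.rpow_pos_of_pos hl0 s₀).le
  simp only [hratio, hpow]
  constructor
  · calc C⁻¹ * (l ^ s₀ * (l ^ σ) ^ a) = l ^ s₀ * (C⁻¹ * (l ^ σ) ^ a) := by ring
      _ ≤ _ := by gcongr
  · calc _ ≤ l ^ s₀ * (C * (l ^ σ) ^ b) := by gcongr
      _ = _ := by ring

end SatisfiesRO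

theorem ConcaveOn.monotoneOn_Ioi_of_nonneg {f : ℝ → ℝ} {c : ℝ} (hf : ConcaveOn ℝ (Ioi c) f)
    (hf₀ : ∀ x > c, 0 ≤ f x) : MonotoneOn f (Ioi c) := by
  intro u hu v hv huv
  by_contra! hvu
  have huv' : u < v := huv.lt_of_ne (by rintro rfl; exact lt_irrefl _ hvu)
  set s := (f v - f u) / (v - u)
  have hs : s < 0 := div_neg_of_neg_of_pos (by linarith) (by linarith)
  -- beyond `v` the graph lies below the line of slope `s < 0` through `(v, f v)`, which is
  -- negative at `x`
  set x := v + 1 - f v / s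
  have hvx : v < x := by
    have : f v / s ≤ 0 := div_nonpos_of_nonneg_of_nonpos (hf₀ v hv) hs.le
    linarith
  have hslope := hf.slope_anti_adjacent hu (hv.trans hvx : c < x) huv' hvx
  rw [div_le_iff₀ (by linarith)] at hslope
  have hx : f x ≤ s := by
    have : s * (x - v) = s - f v := by simp only [x]; field_simp [hs.ne]; ring
    linarith
  linarith [hf₀ x (hv.trans hvx : c < x)]

theorem ConcaveOn.le_div_mul_of_le {s : Set ℝ} {f : ℝ → ℝ} {p a x : ℝ} (hf : ConcaveOn ℝ s f)
    (hp : p ∈ s) (hx : x ∈ s) (hfp : 0 ≤ f p) (hpa : p < a) (hax : a ≤ x) :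
    f x ≤ (x - p) / (a - p) * f a := by
  rcases hax.eq_or_lt with rfl | hax
  · rw [div_self (sub_pos.2 hpa).ne', one_mul]
  have hslope := hf.slope_anti_adjacent hp hx hpa hax
  rw [div_le_div_iff₀ (sub_pos.2 hax) (sub_pos.2 hpa)] at hslope
  rw [div_mul_eq_mul_div, le_div_iff₀ (sub_pos.2 hpa)]
  nlinarith [mul_nonneg hfp (sub_pos.2 hax).le]

theorem ConcaveOn.satisfiesRO_comp_max {f : ℝ → ℝ} {c p b : ℝ} (hf : ConcaveOn ℝ (Ioi c) f)
    (hpos : ∀ x > c, 0 < f x) (hcp : c < p) (hp : 0 ≤ p) (hpb : p < b) :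
    SatisfiesRO (fun τ ↦ f (max τ b)) 0 1 (b / (b - p)) := by
  intro t ht l hl
  have hb : c < b := hcp.trans hpb
  set a := max t b
  set x := max (l * t) b
  have hta : t ≤ a := le_max_left t b
  have hba : b ≤ a := le_max_right t b
  have hax : a ≤ x := max_le_max_right b (le_mul_of_one_le_left (by linarith) hl)
  have hxa : x ≤ l * a := max_le (mul_le_mul_of_nonneg_left hta (by linarith))
    (hba.trans (le_mul_of_one_le_left (by linarith) hl))
  have hfa : 0 < f a := hpos a (hb.trans_le hba)
  simp only [Real.rpow_zero, Real.rpow_one, mul_one]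
  constructor
  · have hmono := hf.monotoneOn_Ioi_of_nonneg (fun y hy ↦ (hpos y hy).le)
      (hb.trans_le hba) (hb.trans_le (hba.trans hax)) hax
    rw [inv_div, le_div_iff₀ hfa]
    calc (b - p) / b * f a ≤ 1 * f a := by gcongr; rw [div_le_one (by linarith)]; linarith
      _ ≤ f x := by rwa [one_mul]
  · have hsub := hf.le_div_mul_of_le hcp (hb.trans_le (hba.trans hax)) (hpos p hcp).le
      (hpb.trans_le hba) hax
    rw [div_le_iff₀ hfa]
    refine hsub.trans (mul_le_mul_of_nonneg_right ?_ hfa.le)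
    rw [div_le_iff₀ (by linarith), div_mul_eq_mul_div, div_mul_eq_mul_div,
      le_div_iff₀ (by linarith)]
    nlinarith [mul_nonneg (sub_nonneg.2 hxa) (sub_pos.2 hpb).le, mul_nonneg hp (sub_pos.2 hpb).le,
      mul_nonneg (mul_nonneg (by linarith : (0:ℝ) ≤ l) hp) (sub_nonneg.2 hba)]

theorem ratio_comp_max_le {ψ f : ℝ → ℝ} {c b K M M₀ : ℝ} (hcb : c < b) (hfb : 0 < f b)
    (hK : ∀ τ > c, ψ τ / f τ ≤ K ∧ f τ / ψ τ ≤ K) (hM : ∀ τ ∈ Icc 1 b, ψ τ ≤ M)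
    (hM₀ : ∀ τ ≥ (1:ℝ), (ψ τ)⁻¹ ≤ M₀) (τ : ℝ) (hτ : 1 ≤ τ) :
    ψ τ / f (max τ b) ≤ max K (max (M / f b) (f b * M₀)) ∧
      f (max τ b) / ψ τ ≤ max K (max (M / f b) (f b * M₀)) := by
  rcases le_total τ b with hτb | hbτ
  · rw [max_eq_right hτb, div_eq_mul_inv (f b)]
    exact ⟨(div_le_div_of_nonneg_right (hM τ ⟨hτ, hτb⟩) hfb.le).trans
        ((le_max_left _ _).trans (le_max_right _ _)),
      (mul_le_mul_of_nonneg_left (hM₀ τ hτ) hfb.le).trans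
        ((le_max_right _ _).trans (le_max_right _ _))⟩
  · rw [max_eq_left hbτ]
    obtain ⟨h₁, h₂⟩ := hK τ (hcb.trans_le hbτ)
    exact ⟨h₁.trans (le_max_left _ _), h₂.trans (le_max_left _ _)⟩

theorem stmt19_general (ψ ψ₁ : ℝ → ℝ) (s₀ s₁ : ℝ) (hs : s₀ < s₁)
    (hψpos : ∀ t > (0:ℝ), 0 < ψ t)
    (hψbd : ∀ a b : ℝ, 0 < a → a < b → ∃ M : ℝ, ∀ τ ∈ Set.Icc a b, ψ τ ≤ M)
    (hψinv : ∀ c > (0:ℝ), ∃ M : ℝ, ∀ τ > c, (ψ τ)⁻¹ ≤ M)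
    (c : ℝ) (hc : 1 < c)
    (hconc : ConcaveOn ℝ (Set.Ioi c) ψ₁)
    (hψ₁pos : ∀ τ > c, 0 < ψ₁ τ)
    (hquot : ∃ K : ℝ, ∀ τ > c, ψ τ / ψ₁ τ ≤ K ∧ ψ₁ τ / ψ τ ≤ K) :
    ∃ c' ≥ (1:ℝ), ∀ t ≥ (1:ℝ), ∀ l ≥ (1:ℝ),
      c'⁻¹ * l ^ s₀ ≤
        ((l * t) ^ s₀ * ψ ((l * t) ^ (s₁ - s₀))) / (t ^ s₀ * ψ (t ^ (s₁ - s₀))) ∧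
      ((l * t) ^ s₀ * ψ ((l * t) ^ (s₁ - s₀))) / (t ^ s₀ * ψ (t ^ (s₁ - s₀))) ≤
        c' * l ^ s₁ := by
  obtain ⟨K, hK⟩ := hquot
  obtain ⟨M, hM⟩ := hψbd 1 (c + 1) one_pos (by linarith)
  obtain ⟨M₀, hM₀⟩ := hψinv (1 / 2) (by norm_num)
  have hψ₁ : SatisfiesRO (fun τ ↦ ψ₁ (max τ (c + 1))) 0 1 _ :=
    hconc.satisfiesRO_comp_max hψ₁pos (p := c + 1 / 2) (by linarith) (by linarith) (by linarith)
  have hψ : SatisfiesRO ψ 0 1 _ := hψ₁.of_comparable (fun τ hτ ↦ hψpos τ (by linarith))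
    (fun τ _ ↦ hψ₁pos _ (by linarith [le_max_right τ (c + 1)]))
    (ratio_comp_max_le (by linarith) (hψ₁pos _ (by linarith)) hK hM
      (fun τ hτ ↦ hM₀ τ (by linarith)))
  have hφ := hψ.comp_rpow (s₀ := s₀) (sub_pos.2 hs).le
  simp only [mul_zero, add_zero, mul_one, add_sub_cancel] at hφ
  exact ⟨_, hφ.one_le (by simpa using (hψpos 1 one_pos).ne'), hφ⟩

/-- If ψ ∈ 𝓑 is pseudoconcave in a neighborhood of infinity (there is a positive concave
ψ₁ on (c,∞) with ψ/ψ₁ and ψ₁/ψ bounded there), then for s₀ < s₁ the function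
φ(t) = t^{s₀} ψ(t^{s₁-s₀}) satisfies the RO condition
c'⁻¹ λ^{s₀} ≤ φ(λt)/φ(t) ≤ c' λ^{s₁} for all t ≥ 1, λ ≥ 1, for some c' ≥ 1. -/
theorem stmt19 (ψ ψ₁ : ℝ → ℝ) (s₀ s₁ : ℝ) (hs : s₀ < s₁)
    (hmeas : Measurable ψ)
    (hψpos : ∀ t > (0:ℝ), 0 < ψ t)
    (hψbd : ∀ a b : ℝ, 0 < a → a < b → ∃ M : ℝ, ∀ τ ∈ Set.Icc a b, ψ τ ≤ M)
    (hψinv : ∀ c > (0:ℝ), ∃ M : ℝ, ∀ τ > c, (ψ τ)⁻¹ ≤ M)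
    (c : ℝ) (hc : 1 < c)
    (hconc : ConcaveOn ℝ (Set.Ioi c) ψ₁)
    (hψ₁pos : ∀ τ > c, 0 < ψ₁ τ)
    (hquot : ∃ K : ℝ, ∀ τ > c, ψ τ / ψ₁ τ ≤ K ∧ ψ₁ τ / ψ τ ≤ K) :
    ∃ c' ≥ (1:ℝ), ∀ t ≥ (1:ℝ), ∀ l ≥ (1:ℝ),
      c'⁻¹ * l ^ s₀ ≤
        ((l * t) ^ s₀ * ψ ((l * t) ^ (s₁ - s₀))) / (t ^ s₀ * ψ (t ^ (s₁ - s₀))) ∧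
      ((l * t) ^ s₀ * ψ ((l * t) ^ (s₁ - s₀))) / (t ^ s₀ * ψ (t ^ (s₁ - s₀))) ≤
        c' * l ^ s₁ :=
  stmt19_general ψ ψ₁ s₀ s₁ hs hψpos hψbd hψinv c hc hconc hψ₁pos hquot
end
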